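/- (Carleman's condition) Let μ be a Borel probability measure on ℝ with all moments m_k = ∫ x^k dμ finite. If limsup_{k→∞} m_{2k}^{1/(2k)} / (2k) < ∞, then μ is the unique probability measure on ℝ with moment sequence (m_k). -/

import Mathlib

/-!
Carleman's growth bound `m_{2k} ≤ (C · 2k)^{2k}` together with `n^n / n! ≤ e^n` makes
`∑ t^{2k} m_{2k} / (2k)!` converge for `|t| < 1 / (C e)`, so `exp (t x) ≤ 2 cosh (t x)` is
integrable there and the moment generating function exists near `0`. The complex moment
generating function is then analytic on a vertical strip around the imaginary axis, and its
Taylor coefficients at `0` are the moments. Two measures with the same moments therefore have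
complex moment generating functions agreeing near `0`, hence on the whole strip by the identity
principle, and in particular on the imaginary axis: their characteristic functions coincide.
-/

open MeasureTheory Filter Complex ProbabilityTheory
open scoped Nat Topology

lemma integrable_cosh_mul_of_summable {μ : Measure ℝ}
    (hint : ∀ k : ℕ, Integrable (fun x : ℝ ↦ x ^ (2 * k)) μ) {t : ℝ}
    (hsum : Summable fun k : ℕ ↦ t ^ (2 * k) * (∫ x, x ^ (2 * k) ∂μ) / (2 * k)!) :
    Integrable (fun x : ℝ ↦ Real.cosh (t * x)) μ := by
  set f : ℕ → ℝ → ℝ := fun k x ↦ (t * x) ^ (2 * k) / (2 * k)!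
  have hf_nonneg (k : ℕ) (x : ℝ) : 0 ≤ f k x :=
    div_nonneg ((even_two_mul k).pow_nonneg _) (Nat.cast_nonneg _)
  have hf_int (k : ℕ) : Integrable (f k) μ := by
    simpa only [f, mul_pow, mul_div_assoc'] using ((hint k).const_mul (t ^ (2 * k))).div_const _
  have hf_integral (k : ℕ) :
      ∫ x, f k x ∂μ = t ^ (2 * k) * (∫ x, x ^ (2 * k) ∂μ) / (2 * k)! := by
    simp only [f, mul_pow, integral_div, integral_const_mul]
  refine ⟨by fun_prop, ?_⟩
  calc ∫⁻ x, ‖Real.cosh (t * x)‖ₑ ∂μ = ∫⁻ x, ∑' k, ENNReal.ofReal (f k x) ∂μ := by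
        refine lintegral_congr fun x ↦ ?_
        rw [Real.enorm_of_nonneg (Real.cosh_pos _).le, Real.cosh_eq_tsum,
          ENNReal.ofReal_tsum_of_nonneg (hf_nonneg · x) (Real.hasSum_cosh _).summable]
    _ = ∑' k, ENNReal.ofReal (∫ x, f k x ∂μ) := by
        rw [lintegral_tsum fun k ↦ (hf_int k).1.aemeasurable.ennreal_ofReal]
        congr 1 with k
        rw [ofReal_integral_eq_lintegral_ofReal (hf_int k) (.of_forall (hf_nonneg k))]
    _ = ENNReal.ofReal (∑' k, ∫ x, f k x ∂μ) :=
        (ENNReal.ofReal_tsum_of_nonneg (fun k ↦ integral_nonneg (hf_nonneg k))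
          (by simpa only [hf_integral] using hsum)).symm
    _ < ⊤ := ENNReal.ofReal_lt_top

lemma integrable_exp_mul_of_summable {μ : Measure ℝ}
    (hint : ∀ k : ℕ, Integrable (fun x : ℝ ↦ x ^ (2 * k)) μ) {t : ℝ}
    (hsum : Summable fun k : ℕ ↦ t ^ (2 * k) * (∫ x, x ^ (2 * k) ∂μ) / (2 * k)!) :
    Integrable (fun x : ℝ ↦ Real.exp (t * x)) μ := by
  refine ((integrable_cosh_mul_of_summable hint hsum).const_mul 2).mono' (by fun_prop) ?_
  refine .of_forall fun x ↦ ?_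
  rw [Real.norm_of_nonneg (Real.exp_pos _).le, Real.cosh_eq]
  linarith [Real.exp_pos (-(t * x))]

lemma summable_pow_mul_div_factorial_of_abs_le {a : ℕ → ℝ} {C t : ℝ}
    (ha : ∀ᶠ k : ℕ in atTop, |a k| ≤ (C * (2 * k)) ^ (2 * k)) (ht : |t| * |C| * Real.exp 1 < 1) :
    Summable fun k : ℕ ↦ t ^ (2 * k) * a k / (2 * k)! := by
  set q := (|t| * |C| * Real.exp 1) ^ 2
  have hq : q < 1 := by
    have : 0 ≤ |t| * |C| * Real.exp 1 := by positivity
    nlinarith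
  refine .of_norm_bounded_eventually_nat (summable_geometric_of_lt_one (by positivity) hq) ?_
  filter_upwards [ha] with k hk
  have hfact : ((2 * k : ℕ) : ℝ) ^ (2 * k) / (2 * k)! ≤ Real.exp 1 ^ (2 * k) := by
    rw [← Real.exp_nat_mul, mul_one]
    exact Real.pow_div_factorial_le_exp (x := ((2 * k : ℕ) : ℝ)) (Nat.cast_nonneg _) _
  calc ‖t ^ (2 * k) * a k / (2 * k)!‖ = |t| ^ (2 * k) * |a k| / (2 * k)! := by simp
    _ ≤ |t| ^ (2 * k) * (|C| ^ (2 * k) * ((2 * k : ℕ) : ℝ) ^ (2 * k)) / (2 * k)! := by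
        gcongr
        calc |a k| ≤ (C * (2 * k)) ^ (2 * k) := hk
          _ ≤ |C * (2 * k)| ^ (2 * k) := by rw [(even_two_mul k).pow_abs]
          _ = _ := by
            push_cast
            rw [abs_mul, mul_pow, abs_of_nonneg (by positivity : (0 : ℝ) ≤ 2 * k)]
    _ = (|t| * |C|) ^ (2 * k) * (((2 * k : ℕ) : ℝ) ^ (2 * k) / (2 * k)!) := by ring
    _ ≤ (|t| * |C|) ^ (2 * k) * Real.exp 1 ^ (2 * k) := by gcongr
    _ = q ^ k := by rw [← mul_pow, pow_mul]

lemma le_mul_pow_of_rpow_one_div_div_le {a C : ℝ} {n : ℕ} (ha : 0 ≤ a) (hn : 0 < n)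
    (h : a ^ ((1 : ℝ) / n) / n ≤ C) : a ≤ (C * n) ^ n := by
  have hn' : (0 : ℝ) < n := Nat.cast_pos.2 hn
  rw [div_le_iff₀ hn', one_div] at h
  rw [← Real.rpow_natCast]
  exact (Real.rpow_inv_le_iff_of_pos ha ((Real.rpow_nonneg ha _).trans h) hn').1 h

lemma zero_mem_interior_integrableExpSet_of_even_moment_le {μ : Measure ℝ}
    (hint : ∀ k : ℕ, Integrable (fun x : ℝ ↦ x ^ (2 * k)) μ) {C : ℝ}
    (hC : ∀ᶠ k : ℕ in atTop, ∫ x, x ^ (2 * k) ∂μ ≤ (C * (2 * k)) ^ (2 * k)) :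
    0 ∈ interior (integrableExpSet id μ) := by
  set r := ((|C| + 1) * Real.exp 1)⁻¹
  have hr : 0 < r := by positivity
  refine mem_interior_iff_mem_nhds.2 <|
    mem_of_superset (Ioo_mem_nhds (neg_lt_zero.2 hr) hr) fun t ht ↦ ?_
  have ht : |t| * |C| * Real.exp 1 < 1 := by
    have hpos : 0 < (|C| + 1) * Real.exp 1 := by positivity
    have htr := mul_lt_mul_of_pos_right (abs_lt.2 ⟨ht.1, ht.2⟩) hpos
    rw [inv_mul_cancel₀ hpos.ne'] at htr
    nlinarith [abs_nonneg t, Real.exp_pos 1]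
  refine integrable_exp_mul_of_summable hint (summable_pow_mul_div_factorial_of_abs_le ?_ ht)
  filter_upwards [hC] with k hk
  rwa [abs_of_nonneg (integral_nonneg fun x ↦ (even_two_mul k).pow_nonneg x)]

theorem MeasureTheory.Measure.ext_of_integral_pow_eq {μ ν : Measure ℝ}
    [IsFiniteMeasure μ] [IsFiniteMeasure ν]
    (hμ : 0 ∈ interior (integrableExpSet id μ)) (hν : 0 ∈ interior (integrableExpSet id ν))
    (h : ∀ n : ℕ, ∫ x, x ^ n ∂μ = ∫ x, x ^ n ∂ν) : μ = ν := by
  set U : Set ℂ := re ⁻¹' (interior (integrableExpSet id μ) ∩ interior (integrableExpSet id ν))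
  have hU : IsPreconnected U :=
    ((convex_integrableExpSet.interior.inter convex_integrableExpSet.interior).linear_preimage
      reLm).isPreconnected
  have hμU : AnalyticOnNhd ℂ (complexMGF id μ) U := analyticOnNhd_complexMGF.mono fun _ hz ↦ hz.1
  have hνU : AnalyticOnNhd ℂ (complexMGF id ν) U := analyticOnNhd_complexMGF.mono fun _ hz ↦ hz.2
  have hIm : ∀ t : ℝ, (t * I : ℂ) ∈ U := fun t ↦ by simpa [U] using ⟨hμ, hν⟩
  have h0 : (0 : ℂ) ∈ U := by simpa using hIm 0
  have hderiv (n : ℕ) :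
      iteratedDeriv n (complexMGF id μ) 0 = iteratedDeriv n (complexMGF id ν) 0 := by
    rw [iteratedDeriv_complexMGF (by simpa using hμ), iteratedDeriv_complexMGF (by simpa using hν)]
    simp only [id, zero_mul, Complex.exp_zero, mul_one, ← ofReal_pow]
    rw [integral_complex_ofReal, integral_complex_ofReal, h n]
  have hnhds : complexMGF id μ =ᶠ[𝓝 0] complexMGF id ν := by
    have hsub := (hμU 0 h0).hasFPowerSeriesAt.sub (hνU 0 h0).hasFPowerSeriesAt
    simp only [hderiv, sub_self] at hsub
    exact hsub.eventually_eq_zero.mono fun _ hz ↦ sub_eq_zero.mp hz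
  refine Measure.ext_of_charFun (funext fun t ↦ ?_)
  rw [← complexMGF_id_mul_I, ← complexMGF_id_mul_I]
  exact hμU.eqOn_of_preconnected_of_eventuallyEq hνU hU h0 hnhds (hIm t)

/-- Carleman's condition: if the even moments `m_{2k}` of `μ` satisfy
`limsup m_{2k}^{1/(2k)}/(2k) < ∞`, then `μ` is the unique probability measure
with moment sequence `(m_k)`. -/
theorem stmt11 (μ : Measure ℝ) [IsProbabilityMeasure μ] (m : ℕ → ℝ)
    (hint : ∀ k : ℕ, Integrable (fun x : ℝ => x ^ k) μ)
    (hm : ∀ k : ℕ, ∫ x, x ^ k ∂μ = m k)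
    (hCarleman : ∃ C : ℝ, ∀ᶠ k : ℕ in atTop,
      (m (2 * k)) ^ ((1 : ℝ) / (2 * k)) / (2 * k) ≤ C) :
    ∀ ν : Measure ℝ, IsProbabilityMeasure ν →
      (∀ k : ℕ, Integrable (fun x : ℝ => x ^ k) ν ∧ ∫ x, x ^ k ∂ν = m k) →
      ν = μ := by
  intro ν _ hν
  obtain ⟨C, hC⟩ := hCarleman
  have hbound : ∀ᶠ k : ℕ in atTop, m (2 * k) ≤ (C * (2 * k)) ^ (2 * k) := by
    filter_upwards [hC, eventually_gt_atTop 0] with k hk hk0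
    have hm_nonneg : 0 ≤ m (2 * k) :=
      hm (2 * k) ▸ integral_nonneg fun x ↦ (even_two_mul k).pow_nonneg x
    exact_mod_cast le_mul_pow_of_rpow_one_div_div_le hm_nonneg (by omega : 0 < 2 * k)
      (by exact_mod_cast hk)
  refine Measure.ext_of_integral_pow_eq ?_ ?_ fun n ↦ (hν n).2.trans (hm n).symm
  · exact zero_mem_interior_integrableExpSet_of_even_moment_le (fun k ↦ (hν (2 * k)).1)
      (by simpa only [(hν _).2] using hbound)
  · exact zero_mem_interior_integrableExpSet_of_even_moment_le (fun k ↦ hint (2 * k))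
      (by simpa only [hm] using hbound)
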